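/- For any reported preference profile Q and tier structure t, the outcome of the tiered deferred acceptance mechanism under Q equals its outcome under the reshuffled profile Q̃, and also equals the outcome of the (untiered) deferred acceptance mechanism under Q̃; that is, TDA(t)(Q) = TDA(t)(Q̃) = DA(Q̃). -/

import Mathlib

set_option linter.unusedSectionVars false

namespace SchoolChoice

/-- A strict preference over `S ∪ {self}`, encoded by an injective ranking function on
`Option S`; `none` denotes being unmatched (the student himself), and a smaller rank
means more preferred. Injective rankings on a finite set are exactly strict linear orders. -/
structure Pref (S : Type) where
  rank : Option S → ℕ
  inj : Function.Injective rank

/-- Quotas together with strict priorities of the schools: `prank s` ranks the students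
at school `s`, a smaller rank meaning higher priority. -/
structure Prio (I S : Type) where
  quota : S → ℕ
  prank : S → I → ℕ
  inj : ∀ s, Function.Injective (prank s)

variable {I S : Type} [Fintype I] [Fintype S] [DecidableEq I] [DecidableEq S]

/-- `i` has strictly higher priority than `j` at school `s`. -/
def Prio.higher (E : Prio I S) (s : S) (i j : I) : Prop :=
  E.prank s i < E.prank s j

/-- A matching assigns to each student a school or himself (`none`). -/
abbrev Matching (I S : Type) := I → Option S

/-- The set of students assigned to school `s`. -/
def assigned (μ : Matching I S) (s : S) : Finset I :=
  Finset.univ.filter (fun i => μ i = some s)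

/-- Quotas are respected. -/
def Feasible (E : Prio I S) (μ : Matching I S) : Prop :=
  ∀ s, (assigned μ s).card ≤ E.quota s

/-- `(i, s)` is a blocking pair of `μ` with respect to preferences `R`:
`i` strictly prefers `s` to his assignment, and either `s` has an empty seat
(wastefulness) or some student assigned to `s` has lower priority than `i`
(justified envy). -/
def Blocks (E : Prio I S) (R : I → Pref S) (μ : Matching I S) (i : I) (s : S) : Prop :=
  (R i).rank (some s) < (R i).rank (μ i) ∧
    ((assigned μ s).card < E.quota s ∨ ∃ j, μ j = some s ∧ E.higher s i j)

/-- Individual rationality: every student weakly prefers his assignment to being unmatched. -/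
def IndivRat (R : I → Pref S) (μ : Matching I S) : Prop :=
  ∀ i, (R i).rank (μ i) ≤ (R i).rank none

/-- Non-wastefulness: no student prefers a school with an empty seat to his assignment. -/
def NonWasteful (E : Prio I S) (R : I → Pref S) (μ : Matching I S) : Prop :=
  ∀ i s, (R i).rank (some s) < (R i).rank (μ i) → E.quota s ≤ (assigned μ s).card

/-- Stability: feasible, individually rational, and no blocking pair
(no justified envy and non-wasteful). -/
def Stable (E : Prio I S) (R : I → Pref S) (μ : Matching I S) : Prop :=
  Feasible E μ ∧ IndivRat R μ ∧ ∀ i s, ¬ Blocks E R μ i s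

/-- The student-optimal stable matching for the (reported) preferences. -/
def StudentOptimal (E : Prio I S) (R : I → Pref S) (μ : Matching I S) : Prop :=
  Stable E R μ ∧ ∀ ν, Stable E R ν → ∀ i, (R i).rank (μ i) ≤ (R i).rank (ν i)

open Classical in
/-- The student-proposing deferred acceptance mechanism: by the Gale–Shapley theorem its
outcome is the (unique) student-optimal stable matching of the reported preferences. -/
noncomputable def DA (E : Prio I S) (R : I → Pref S) : Matching I S :=
  if h : ∃ μ, StudentOptimal E R μ then h.choose else fun _ => none

/-- A strict upper bound for the values of a ranking. -/
noncomputable def bnd (p : Pref S) : ℕ := (Finset.univ.sup p.rank) + 1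

lemma rank_lt_bnd (p : Pref S) (x : Option S) : p.rank x < bnd p :=
  Nat.lt_succ_of_le (Finset.le_sup (Finset.mem_univ x))

private lemma mul_add_lt {a K B r : ℕ} (ha : a ≤ K) (hr : r < B) :
    a * B + r < (K + 1) * B := by
  calc a * B + r < a * B + B := by omega
    _ = (a + 1) * B := by ring
    _ ≤ (K + 1) * B := Nat.mul_le_mul (by omega) le_rfl

/-- Is an alternative "inside the market" `A`?  `none` always is. -/
def goodB (A : S → Prop) [DecidablePred A] : Option S → Bool
  | none => true
  | some s => decide (A s)

/-- The preference truncated to the set of schools `A`: schools in `A` (and the outside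
option `none`) keep their relative order, while all schools outside `A` are pushed below
`none` (become unacceptable), keeping their relative order among themselves. -/
noncomputable def trunc (A : S → Prop) [DecidablePred A] (p : Pref S) : Pref S where
  rank x := (if goodB A x then 0 else bnd p) + p.rank x
  inj := by
    intro x y h
    by_cases hx : goodB A x <;> by_cases hy : goodB A y <;>
      simp only [hx, hy, if_true, if_false, Bool.false_eq_true, zero_add] at h
    · exact p.inj h
    · have := rank_lt_bnd p x; omega
    · have := rank_lt_bnd p y; omega
    · exact p.inj (by omega)

/-- The reshuffled preference with respect to a tier structure `t`: acceptable schools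
are grouped by tier in increasing tier order (keeping the original relative order within
each tier) above `none`, and all unacceptable schools are placed below `none`. -/
noncomputable def reshuffle (t : S → ℕ) (p : Pref S) : Pref S where
  rank x :=
    Option.elim x ((Finset.univ.sup t + 1) * bnd p)
      (fun s =>
        if p.rank (some s) < p.rank none then t s * bnd p + p.rank (some s)
        else (Finset.univ.sup t + 1) * bnd p + 1 + p.rank (some s))
  inj := by
    have hB : ∀ x, p.rank x < bnd p := rank_lt_bnd p
    have hK : ∀ s : S, t s ≤ Finset.univ.sup t := fun s => Finset.le_sup (Finset.mem_univ s)
    intro x y h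
    rcases x with _ | s <;> rcases y with _ | s' <;>
      simp only [Option.elim_none, Option.elim_some] at h
    · rfl
    · by_cases hy : p.rank (some s') < p.rank none <;> simp only [hy, if_true, if_false] at h
      · have := mul_add_lt (hK s') (hB (some s')); omega
      · omega
    · by_cases hx : p.rank (some s) < p.rank none <;> simp only [hx, if_true, if_false] at h
      · have := mul_add_lt (hK s) (hB (some s)); omega
      · omega
    · by_cases hx : p.rank (some s) < p.rank none <;>
        by_cases hy : p.rank (some s') < p.rank none <;>
        simp only [hx, hy, if_true, if_false] at h
      · have hts : t s = t s' := by
          rcases Nat.lt_trichotomy (t s) (t s') with h1 | h1 | h1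
          · have h2 : t s * bnd p + p.rank (some s) < t s' * bnd p + p.rank (some s') := by
              have h3 := mul_add_lt (a := t s) (K := t s' - 1) (B := bnd p) (by omega) (hB (some s))
              have h4 : (t s' - 1 + 1) * bnd p = t s' * bnd p := by congr 1; omega
              omega
            omega
          · exact h1
          · have h2 : t s' * bnd p + p.rank (some s') < t s * bnd p + p.rank (some s) := by
              have h3 := mul_add_lt (a := t s') (K := t s - 1) (B := bnd p) (by omega) (hB (some s'))
              have h4 : (t s - 1 + 1) * bnd p = t s * bnd p := by congr 1; omega
              omega
            omega
        rw [hts] at h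
        exact p.inj (by omega)
      · have := mul_add_lt (hK s) (hB (some s)); omega
      · have := mul_add_lt (hK s') (hB (some s')); omega
      · exact p.inj (by omega)

/-- A tier structure assigning each school a tier in `{1, …, T}`, each tier nonempty. -/
def IsTierStructure (t : S → ℕ) (T : ℕ) : Prop :=
  (∀ s, 1 ≤ t s ∧ t s ≤ T) ∧ ∀ k, 1 ≤ k → k ≤ T → ∃ s, t s = k

/-- Rounds `1, …, k` of the tiered deferred acceptance mechanism: in round `k` the
students left unmatched so far participate in the DA mechanism with their preferences
truncated to the tier-`k` schools (already matched students participate with nothing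
acceptable); students matched in earlier rounds keep their assignments. -/
noncomputable def TDAaux (E : Prio I S) (t : S → ℕ) (Q : I → Pref S) : ℕ → Matching I S
  | 0 => fun _ => none
  | k + 1 => fun i =>
      match TDAaux E t Q k i with
      | some s => some s
      | none =>
          DA E (fun j =>
            if TDAaux E t Q k j = none then trunc (fun s => t s = k + 1) (Q j)
            else trunc (fun _ => False) (Q j)) i

/-- The tiered deferred acceptance mechanism under tier structure `t`. -/
noncomputable def TDA (E : Prio I S) (t : S → ℕ) (Q : I → Pref S) : Matching I S :=
  TDAaux E t Q (Finset.univ.sup t)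

/-- `Q` is a (pure) Nash equilibrium of the preference revelation game induced by the
mechanism `f` when the true preferences are `R`: no student can obtain a school he truly
strictly prefers by unilaterally changing his report. -/
def NashEq (R : I → Pref S) (f : (I → Pref S) → Matching I S) (Q : I → Pref S) : Prop :=
  ∀ (i : I) (Qi' : Pref S),
    (R i).rank (f Q i) ≤ (R i).rank (f (Function.update Q i Qi') i)

/-- `μ` is a Nash equilibrium outcome of the revelation game induced by `f` at true
preferences `R`. -/
def NashOutcome (R : I → Pref S) (f : (I → Pref S) → Matching I S) (μ : Matching I S) : Prop :=
  ∃ Q, NashEq R f Q ∧ f Q = μ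

/-- The preference `p` is aligned with the tier structure `t`: a (weakly) more preferred
school always lies in a weakly earlier tier. -/
def AlignedPref (t : S → ℕ) (p : Pref S) : Prop :=
  ∀ s s' : S, p.rank (some s) ≤ p.rank (some s') → t s ≤ t s'

/-- `p` lists exactly the school in `o` (if any) as acceptable. -/
def OnlyAcceptable (p : Pref S) (o : Option S) : Prop :=
  ∀ s : S, (p.rank (some s) < p.rank none ↔ o = some s)

/-- An Ergin cycle of the priority structure among the schools in `A`. -/
def Cycle (E : Prio I S) (A : S → Prop) : Prop :=
  ∃ a b : S, A a ∧ A b ∧ a ≠ b ∧ ∃ i j k : I,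
    E.higher a i j ∧ E.higher a j k ∧ E.higher b k i ∧
    ∃ Ia Ib : Finset I, Disjoint Ia Ib ∧
      (∀ l ∈ Ia, l ≠ i ∧ l ≠ j ∧ l ≠ k ∧ E.higher a l j) ∧
      (∀ l ∈ Ib, l ≠ i ∧ l ≠ j ∧ l ≠ k ∧ E.higher b l i) ∧
      Ia.card = E.quota a - 1 ∧ Ib.card = E.quota b - 1

/-- Within-tier acyclicity of a generalized priority structure: no Ergin cycle among the
schools of any single tier. -/
def WithinTierAcyclic (E : Prio I S) (t : S → ℕ) : Prop :=
  ∀ k : ℕ, ¬ Cycle E (fun s => t s = k)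

/-- The (strict) preference `pr` of school `s` over sets of students is a responsive
extension of its priorities. -/
def Responsive (E : Prio I S) (s : S) (pr : Finset I → Finset I → Prop) : Prop :=
  ∀ (J : Finset I) (i j : I), i ∉ J → j ∉ J → E.higher s i j →
    pr (insert i J) (insert j J)

/-- `t` is a refinement of `t'`: `t'` ranks `a` in a strictly later tier than `b` only
if `t` does. -/
def Refines (t t' : S → ℕ) : Prop :=
  ∀ a b : S, t' b < t' a → t b < t a

/-!
Let `μ = DA(Q̃)`, the student-optimal stable matching for the reshuffled profile (it exists by
the Gale–Shapley argument). By induction on `k`, the first `k` rounds of TDA produce the part of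
`μ` at the tiers `≤ k`. In round `m`, the tier-`m` part `ν` of `μ` is stable for the truncated
round preferences. If `ρ` is the student-optimal outcome of that round, then overwriting `μ` by `ρ`
gives a matching that is still stable for `Q̃`: by the rural hospital theorem `ρ` and `ν` match
the same students, so no seat outside tier `m` is freed, and reshuffling puts tier `m` above
every later tier. As `μ` is student-optimal, `ν` is then at least as good as `ρ` for everyone,
so `ρ = ν`. Finally, reshuffling `Q̃` again does not change the order of its acceptable schools,
so `DA(Q̃) = DA(Q̃̃) = TDA(Q̃)`.
-/

lemma Pref.rank_some_lt_none_iff_le (p : Pref S) (s : S) :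
    p.rank (some s) < p.rank none ↔ p.rank (some s) ≤ p.rank none :=
  ⟨le_of_lt, fun h => h.lt_of_ne (p.inj.ne (Option.some_ne_none s))⟩

lemma Pref.rank_none_lt_of_not_lt (p : Pref S) {s : S} (h : ¬ p.rank (some s) < p.rank none) :
    p.rank none < p.rank (some s) :=
  (not_lt.1 h).lt_of_ne (p.inj.ne (Option.some_ne_none s).symm)

lemma mul_add_lt_mul_add_of_lt {a b B r : ℕ} (r' : ℕ) (hab : a < b) (hr : r < B) :
    a * B + r < b * B + r' := by
  nlinarith

section Truncation

variable {A : S → Prop} [DecidablePred A] (p : Pref S)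

@[simp] lemma trunc_rank_none : (trunc A p).rank none = p.rank none := by
  simp [trunc, goodB]

lemma trunc_rank_of_mem {s : S} (h : A s) : (trunc A p).rank (some s) = p.rank (some s) := by
  simp [trunc, goodB, h]

lemma trunc_rank_le_none_iff {s : S} :
    (trunc A p).rank (some s) ≤ (trunc A p).rank none ↔ A s ∧ p.rank (some s) < p.rank none := by
  by_cases hA : A s
  · simp [trunc_rank_of_mem p hA, hA, p.rank_some_lt_none_iff_le]
  · have := rank_lt_bnd p none
    simp only [trunc, goodB, hA, decide_false, Bool.false_eq_true, if_false, if_true,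
      zero_add, false_and, iff_false, not_le]
    omega

end Truncation

section Reshuffle

variable (t : S → ℕ) (p : Pref S)

lemma reshuffle_rank_of_lt_none {s : S} (h : p.rank (some s) < p.rank none) :
    (reshuffle t p).rank (some s) = t s * bnd p + p.rank (some s) := by
  simp [reshuffle, h]

lemma reshuffle_rank_lt_none_iff {s : S} :
    (reshuffle t p).rank (some s) < (reshuffle t p).rank none ↔
      p.rank (some s) < p.rank none := by
  by_cases h : p.rank (some s) < p.rank none
  · rw [reshuffle_rank_of_lt_none t p h]
    simpa [h, reshuffle] using mul_add_lt_mul_add_of_lt 0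
      (Nat.lt_succ_of_le (Finset.le_sup (Finset.mem_univ s))) (rank_lt_bnd p (some s))
  · simp only [reshuffle, h, if_false, Option.elim, iff_false, not_lt]
    omega

lemma reshuffle_rank_lt_of_tier_lt {s s' : S} (hs : p.rank (some s) < p.rank none)
    (h : t s < t s') : (reshuffle t p).rank (some s) < (reshuffle t p).rank (some s') := by
  by_cases hs' : p.rank (some s') < p.rank none
  · rw [reshuffle_rank_of_lt_none t p hs, reshuffle_rank_of_lt_none t p hs']
    exact mul_add_lt_mul_add_of_lt _ h (rank_lt_bnd p _)
  · exact ((reshuffle_rank_lt_none_iff t p).2 hs).trans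
      ((reshuffle t p).rank_none_lt_of_not_lt (mt (reshuffle_rank_lt_none_iff t p).1 hs'))

lemma reshuffle_rank_le_iff_of_tier_eq {s s' : S} (hs : p.rank (some s) < p.rank none)
    (hs' : p.rank (some s') < p.rank none) (h : t s = t s') :
    (reshuffle t p).rank (some s) ≤ (reshuffle t p).rank (some s') ↔
      p.rank (some s) ≤ p.rank (some s') := by
  rw [reshuffle_rank_of_lt_none t p hs, reshuffle_rank_of_lt_none t p hs', h,
    Nat.add_le_add_iff_left]

lemma reshuffle_rank_lt_iff_of_tier_eq {s s' : S} (hs : p.rank (some s) < p.rank none)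
    (hs' : p.rank (some s') < p.rank none) (h : t s = t s') :
    (reshuffle t p).rank (some s) < (reshuffle t p).rank (some s') ↔
      p.rank (some s) < p.rank (some s') := by
  simpa only [not_le] using (reshuffle_rank_le_iff_of_tier_eq t p hs' hs h.symm).not

lemma reshuffle_rank_le_iff {s s' : S} (hs : p.rank (some s) < p.rank none)
    (hs' : p.rank (some s') < p.rank none) :
    (reshuffle t p).rank (some s) ≤ (reshuffle t p).rank (some s') ↔
      t s < t s' ∨ t s = t s' ∧ p.rank (some s) ≤ p.rank (some s') := by
  rcases lt_trichotomy (t s) (t s') with h | h | h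
  · simp [h, (reshuffle_rank_lt_of_tier_lt t p hs h).le]
  · simp [h, reshuffle_rank_le_iff_of_tier_eq t p hs hs' h]
  · simp [h.not_gt, h.ne', reshuffle_rank_lt_of_tier_lt t p hs' h]

end Reshuffle

lemma Blocks.of_assigned_eq {E : Prio I S} {R R' : I → Pref S} {μ μ' : Matching I S} {i : I}
    {s : S} (hb : Blocks E R μ i s) (hrank : (R' i).rank (some s) < (R' i).rank (μ' i))
    (hassigned : assigned μ s = assigned μ' s) : Blocks E R' μ' i s := by
  refine ⟨hrank, ?_⟩
  rcases hb.2 with hvac | ⟨j, hj, hij⟩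
  · exact Or.inl (hassigned ▸ hvac)
  · have : j ∈ assigned μ' s := hassigned ▸ (by simpa [assigned] using hj)
    exact Or.inr ⟨j, by simpa [assigned] using this, hij⟩

section SameAcceptableOrder

-- Stability and student-optimality only compare alternatives with acceptable ones (or `none`),
-- so `DA` sees a profile only up to this relation.
def Pref.SameAcceptableOrder (p q : Pref S) : Prop :=
  ∀ x y, p.rank x ≤ p.rank none → (p.rank y ≤ p.rank x ↔ q.rank y ≤ q.rank x)

lemma Pref.sameAcceptableOrder_of {p q : Pref S}
    (hacc : ∀ s, p.rank (some s) < p.rank none ↔ q.rank (some s) < q.rank none)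
    (hle : ∀ s s', p.rank (some s) < p.rank none → p.rank (some s') < p.rank none →
      (p.rank (some s) ≤ p.rank (some s') ↔ q.rank (some s) ≤ q.rank (some s'))) :
    p.SameAcceptableOrder q := by
  have hle_none : ∀ y, p.rank y ≤ p.rank none ↔ q.rank y ≤ q.rank none := by
    rintro (_ | s)
    · simp
    · rw [← p.rank_some_lt_none_iff_le, ← q.rank_some_lt_none_iff_le, hacc]
  rintro (_ | s) y hx
  · exact hle_none y
  rcases y with _ | s'
  · have hs := (p.rank_some_lt_none_iff_le s).2 hx
    simp [hs.not_ge, ((hacc s).1 hs).not_ge]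
  by_cases hs' : p.rank (some s') < p.rank none
  · exact hle s' s hs' ((p.rank_some_lt_none_iff_le s).2 hx)
  · have hq := mt (hacc s').2 hs'
    simp only [Pref.rank_some_lt_none_iff_le, not_le] at hs' hq
    exact iff_of_false (by omega) (by have := (hle_none (some s)).1 hx; omega)

lemma Pref.SameAcceptableOrder.symm {p q : Pref S} (h : p.SameAcceptableOrder q) :
    q.SameAcceptableOrder p := by
  have hnone : ∀ y, p.rank y ≤ p.rank none ↔ q.rank y ≤ q.rank none := fun y => h none y le_rfl
  exact fun x y hx => (h x y ((hnone x).2 hx)).symm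

lemma sameAcceptableOrder_reshuffle_reshuffle (t : S → ℕ) (p : Pref S) :
    (reshuffle t (reshuffle t p)).SameAcceptableOrder (reshuffle t p) := by
  refine Pref.sameAcceptableOrder_of (fun s => reshuffle_rank_lt_none_iff t _) fun s s' hs hs' => ?_
  rw [reshuffle_rank_lt_none_iff] at hs hs'
  have hps := (reshuffle_rank_lt_none_iff t p).1 hs
  have hps' := (reshuffle_rank_lt_none_iff t p).1 hs'
  rw [reshuffle_rank_le_iff t _ hs hs', reshuffle_rank_le_iff t p hps hps']
  omega

variable {E : Prio I S} {P P' : I → Pref S} {μ : Matching I S}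

lemma Blocks.of_sameAcceptableOrder (h : ∀ i, (P i).SameAcceptableOrder (P' i))
    (hIR : IndivRat P μ) {i : I} {s : S} (hb : Blocks E P' μ i s) : Blocks E P μ i s := by
  refine ⟨((h i (μ i) (some s) (hIR i)).2 hb.1.le).lt_of_ne fun he => ?_, hb.2⟩
  exact hb.1.ne (congrArg (P' i).rank ((P i).inj he))

lemma Stable.of_sameAcceptableOrder (h : ∀ i, (P i).SameAcceptableOrder (P' i))
    (hst : Stable E P μ) : Stable E P' μ :=
  ⟨hst.1, fun i => (h i none (μ i) le_rfl).1 (hst.2.1 i),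
    fun i s hb => hst.2.2 i s (hb.of_sameAcceptableOrder h hst.2.1)⟩

end SameAcceptableOrder

section GaleShapley

open Finset

variable (E : Prio I S) (P : I → Pref S)

instance Prio.decidableHigher (s : S) : DecidableRel (E.higher s) :=
  fun i j => inferInstanceAs (Decidable (E.prank s i < E.prank s j))

lemma Prio.higher_of_prank_le {s : S} {i j : I} (h : E.prank s j ≤ E.prank s i) (hne : j ≠ i) :
    E.higher s j i :=
  h.lt_of_ne fun he => hne (E.inj s he)

-- The state of deferred acceptance is the set `rej` of pairs `(i, s)` such that `s` has rejected
-- `i`. Each student proposes to his best option not yet rejected, so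
-- `assigned (proposal P rej) s` is the set of students currently proposing to `s`.
def available (rej : Finset (I × S)) (i : I) : Finset (Option S) :=
  univ.filter fun x => ∀ s, x = some s → (i, s) ∉ rej

variable {E P} {rej : Finset (I × S)} {i : I}

lemma none_mem_available : none ∈ available rej i := by
  simp [available]

lemma some_mem_available {s : S} : some s ∈ available rej i ↔ (i, s) ∉ rej := by
  simp [available]

variable (P rej i) in
noncomputable def proposal : Option S :=
  (exists_min_image (available rej i) (P i).rank ⟨none, none_mem_available⟩).choose

lemma proposal_mem_available : proposal P rej i ∈ available rej i :=
  (exists_min_image (available rej i) (P i).rank ⟨none, none_mem_available⟩).choose_spec.1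

lemma proposal_rank_le {x : Option S} (hx : x ∈ available rej i) :
    (P i).rank (proposal P rej i) ≤ (P i).rank x :=
  (exists_min_image (available rej i) (P i).rank ⟨none, none_mem_available⟩).choose_spec.2 x hx

lemma proposal_insert_of_ne {i₀ : I} {s : S} (h : i ≠ i₀) :
    proposal P (insert (i₀, s) rej) i = proposal P rej i := by
  have havail : available (insert (i₀, s) rej) i = available rej i := by
    ext x
    simp [available, h]
  refine (P i).inj (le_antisymm (proposal_rank_le ?_) (proposal_rank_le ?_))
  · exact havail ▸ proposal_mem_available
  · exact havail ▸ proposal_mem_available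

variable (E P) in
structure RejectionInvariant (rej : Finset (I × S)) : Prop where
  crowded : ∀ i s, (i, s) ∈ rej →
    E.quota s ≤ ((assigned (proposal P rej) s).filter (E.higher s · i)).card
  sound : ∀ ν, Stable E P ν → ∀ i s, (i, s) ∈ rej → ν i ≠ some s

lemma RejectionInvariant.mem_available (h : RejectionInvariant E P rej) {ν : Matching I S}
    (hν : Stable E P ν) (i : I) : ν i ∈ available rej i := by
  simp only [available, mem_filter, mem_univ, true_and]
  rintro s hs hrej
  exact h.sound ν hν i s hrej hs

lemma erase_assigned_subset_insert (i₀ : I) (s s' : S) :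
    (assigned (proposal P rej) s').erase i₀ ⊆ assigned (proposal P (insert (i₀, s) rej)) s' := by
  intro j hj
  rw [mem_erase] at hj
  simpa [assigned, proposal_insert_of_ne hj.1] using hj.2

lemma RejectionInvariant.crowded_insert {s : S} {i₀ : I} (h : RejectionInvariant E P rej)
    (hover : E.quota s < (assigned (proposal P rej) s).card)
    (hlow : ∀ j ∈ assigned (proposal P rej) s, E.prank s j ≤ E.prank s i₀)
    (hi₀ : i₀ ∈ assigned (proposal P rej) s) (i : I) (s' : S)
    (hmem : (i, s') ∈ insert (i₀, s) rej) : E.quota s' ≤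
      ((assigned (proposal P (insert (i₀, s) rej)) s').filter (E.higher s' · i)).card := by
  obtain ⟨rfl, rfl⟩ | hold := by simpa using hmem
  · have hsub : (assigned (proposal P rej) s').erase i ⊆
        (assigned (proposal P (insert (i, s') rej)) s').filter (E.higher s' · i) :=
      fun j hj => mem_filter.2 ⟨erase_assigned_subset_insert i s' s' hj,
        E.higher_of_prank_le (hlow j (mem_of_mem_erase hj)) (ne_of_mem_erase hj)⟩
    have := card_le_card hsub
    rw [card_erase_of_mem hi₀] at this
    omega
  set F := (assigned (proposal P rej) s').filter (E.higher s' · i)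
  have hsub : F.erase i₀ ⊆
      (assigned (proposal P (insert (i₀, s) rej)) s').filter (E.higher s' · i) := by
    intro j hj
    obtain ⟨hne, hjF⟩ := mem_erase.1 hj
    obtain ⟨hjs', hji⟩ := mem_filter.1 hjF
    exact mem_filter.2 ⟨erase_assigned_subset_insert i₀ s s' (mem_erase.2 ⟨hne, hjs'⟩), hji⟩
  refine le_trans ?_ (card_le_card hsub)
  by_cases hi₀F : i₀ ∈ F
  · -- the rejected student outranks `i`, hence so does every proposer to `s`
    have hs' : s' = s := by
      have h1 : proposal P rej i₀ = some s' := by simpa [assigned] using (mem_filter.1 hi₀F).1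
      have h2 : proposal P rej i₀ = some s := by simpa [assigned] using hi₀
      exact Option.some_injective _ (h1.symm.trans h2)
    subst hs'
    have hFall : F = assigned (proposal P rej) s' :=
      filter_true_of_mem fun j hj => (hlow j hj).trans_lt (mem_filter.1 hi₀F).2
    rw [card_erase_of_mem hi₀F, hFall]
    omega
  · rw [erase_eq_of_notMem hi₀F]
    exact h.crowded i s' hold

lemma RejectionInvariant.sound_insert {s : S} {i₀ : I} (h : RejectionInvariant E P rej)
    (hover : E.quota s < (assigned (proposal P rej) s).card)
    (hlow : ∀ j ∈ assigned (proposal P rej) s, E.prank s j ≤ E.prank s i₀) (ν : Matching I S)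
    (hν : Stable E P ν) (i : I) (s' : S) (hmem : (i, s') ∈ insert (i₀, s) rej) :
    ν i ≠ some s' := by
  intro hνi
  obtain ⟨rfl, rfl⟩ | hold := by simpa using hmem
  swap
  · exact h.sound ν hν i s' hold hνi
  obtain ⟨j, hj, hνj⟩ : ∃ j ∈ assigned (proposal P rej) s', ν j ≠ some s' := by
    by_contra! hall
    have : assigned (proposal P rej) s' ⊆ assigned ν s' := fun j hj => by
      simpa [assigned] using hall j hj
    exact (card_le_card this).not_gt (lt_of_le_of_lt (hν.1 s') hover)
  have hprop : proposal P rej j = some s' := by simpa [assigned] using hj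
  have hle := proposal_rank_le (P := P) (h.mem_available hν j)
  rw [hprop] at hle
  refine hν.2.2 j s' ⟨hle.lt_of_ne fun he => hνj ((P j).inj he).symm, Or.inr ⟨i, hνi, ?_⟩⟩
  exact E.higher_of_prank_le (hlow j hj) fun he => hνj (he ▸ hνi)

lemma RejectionInvariant.exists_insert (h : RejectionInvariant E P rej)
    (hfeas : ¬ Feasible E (proposal P rej)) :
    ∃ p ∉ rej, RejectionInvariant E P (insert p rej) := by
  obtain ⟨s, hover⟩ : ∃ s, E.quota s < (assigned (proposal P rej) s).card := by
    simpa [Feasible] using hfeas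
  obtain ⟨i₀, hi₀, hlow⟩ :=
    exists_max_image (assigned (proposal P rej) s) (E.prank s) (card_pos.1 (by omega))
  refine ⟨(i₀, s), ?_, h.crowded_insert hover hlow hi₀, h.sound_insert hover hlow⟩
  have hprop : proposal P rej i₀ = some s := by simpa [assigned] using hi₀
  exact some_mem_available.1 (hprop ▸ proposal_mem_available)

theorem RejectionInvariant.exists_feasible {rej : Finset (I × S)} (h : RejectionInvariant E P rej) :
    ∃ rej', RejectionInvariant E P rej' ∧ Feasible E (proposal P rej') := by
  by_cases hfeas : Feasible E (proposal P rej)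
  · exact ⟨rej, h, hfeas⟩
  obtain ⟨p, hp, h'⟩ := h.exists_insert hfeas
  exact h'.exists_feasible
termination_by (univ \ rej).card
decreasing_by
  rw [sdiff_insert]
  exact card_erase_lt_of_mem (by simpa using hp)

theorem RejectionInvariant.studentOptimal_proposal (h : RejectionInvariant E P rej)
    (hfeas : Feasible E (proposal P rej)) : StudentOptimal E P (proposal P rej) := by
  refine ⟨⟨hfeas, fun i => proposal_rank_le none_mem_available, ?_⟩,
    fun ν hν i => proposal_rank_le (h.mem_available hν i)⟩
  rintro i s ⟨hlt, hcap⟩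
  have hrej : (i, s) ∈ rej := by
    by_contra hnot
    exact (proposal_rank_le (some_mem_available.2 hnot)).not_gt hlt
  have hcrowd := h.crowded i s hrej
  rcases hcap with hvac | ⟨j, hj, hij⟩
  · exact hcrowd.not_gt ((card_filter_le _ _).trans_lt hvac)
  · have hall : (assigned (proposal P rej) s).filter (E.higher s · i) =
        assigned (proposal P rej) s :=
      eq_of_subset_of_card_le (filter_subset _ _) ((hfeas s).trans hcrowd)
    have hji : E.higher s j i := by
      have : j ∈ assigned (proposal P rej) s := by simpa [assigned] using hj
      rw [← hall] at this
      exact (mem_filter.1 this).2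
    exact lt_asymm hij hji

variable (E P) in
theorem exists_studentOptimal : ∃ μ, StudentOptimal E P μ := by
  obtain ⟨rej, h, hfeas⟩ := (⟨by simp, by simp⟩ : RejectionInvariant E P ∅).exists_feasible
  exact ⟨_, h.studentOptimal_proposal hfeas⟩

end GaleShapley

section StudentOptimal

variable {E : Prio I S} {P P' : I → Pref S} {μ ν : Matching I S}

lemma StudentOptimal.unique (hμ : StudentOptimal E P μ) (hν : StudentOptimal E P ν) : μ = ν :=
  funext fun i => (P i).inj (le_antisymm (hμ.2 ν hν.1 i) (hν.2 μ hμ.1 i))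

variable (E P) in
lemma DA_studentOptimal : StudentOptimal E P (DA E P) := by
  rw [DA, dif_pos (exists_studentOptimal E P)]
  exact (exists_studentOptimal E P).choose_spec

lemma DA_eq_of_studentOptimal (h : StudentOptimal E P μ) : DA E P = μ :=
  (DA_studentOptimal E P).unique h

lemma StudentOptimal.of_sameAcceptableOrder (h : ∀ i, (P i).SameAcceptableOrder (P' i))
    (hμ : StudentOptimal E P μ) : StudentOptimal E P' μ := by
  refine ⟨hμ.1.of_sameAcceptableOrder h, fun ν hν i => ?_⟩
  have hνP := hν.of_sameAcceptableOrder fun i => (h i).symm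
  exact (h i (ν i) (μ i) (hνP.2.1 i)).1 (hμ.2 ν hνP i)

lemma DA_congr (h : ∀ i, (P i).SameAcceptableOrder (P' i)) : DA E P = DA E P' :=
  DA_eq_of_studentOptimal ((DA_studentOptimal E P).of_sameAcceptableOrder h) |>.symm

open Finset in
lemma card_matched_eq_sum (μ : Matching I S) :
    (univ.filter fun i => μ i ≠ none).card = ∑ s, (assigned μ s).card := by
  have hmatched : univ.filter (fun i => μ i ≠ none) = univ.biUnion (assigned μ) := by
    ext i
    simp [assigned, Option.ne_none_iff_exists']
  rw [hmatched, card_biUnion]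
  intro s _ s' _ hne
  exact disjoint_filter.2 fun i _ h h' => hne (Option.some_injective _ (h.symm.trans h'))

open Finset in
/-- The rural hospital theorem, on the students' side. -/
theorem StudentOptimal.eq_none_iff (hμ : StudentOptimal E P μ) (hν : Stable E P ν) (i : I) :
    μ i = none ↔ ν i = none := by
  have hsub : ∀ j, μ j = none → ν j = none := fun j hj =>
    (P j).inj (le_antisymm (hν.2.1 j) (hj ▸ hμ.2 ν hν j))
  refine ⟨hsub i, fun hνi => by_contra fun hμi => ?_⟩
  -- `ν` matches fewer students than `μ`, so some school has a seat in `ν` that `μ` fills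
  have hlt : (univ.filter fun j => ν j ≠ none).card < (univ.filter fun j => μ j ≠ none).card := by
    refine card_lt_card ((ssubset_iff_of_subset ?_).2 ⟨i, by simpa using hμi, by simpa using hνi⟩)
    intro j
    simpa using mt (hsub j)
  rw [card_matched_eq_sum, card_matched_eq_sum] at hlt
  obtain ⟨s, -, hs⟩ := exists_lt_of_sum_lt hlt
  obtain ⟨j, hjμ, hjν⟩ := not_subset.1 fun h => (card_le_card h).not_gt hs
  have hμj : μ j = some s := by simpa [assigned] using hjμ
  have hνj : ν j ≠ some s := by simpa [assigned] using hjν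
  have hle := hμj ▸ hμ.2 ν hν j
  exact hν.2.2 j s ⟨hle.lt_of_ne fun he => hνj ((P j).inj he).symm,
    Or.inl (hs.trans_le (hμ.1.1 s))⟩

end StudentOptimal

section Restrict

variable {A B : S → Prop} [DecidablePred A] [DecidablePred B] {μ : Matching I S}
  {i : I} {s : S}

def restrictTo (A : S → Prop) [DecidablePred A] (μ : Matching I S) : Matching I S :=
  fun i => (μ i).filter fun s => A s

lemma restrictTo_eq_some_iff : restrictTo A μ i = some s ↔ μ i = some s ∧ A s := by
  simp [restrictTo, Option.filter_eq_some_iff]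

lemma restrictTo_eq_none_iff : restrictTo A μ i = none ↔ ∀ s, μ i = some s → ¬ A s := by
  simp [restrictTo, Option.filter_eq_none_iff]

lemma assigned_restrictTo_subset : assigned (restrictTo A μ) s ⊆ assigned μ s := fun j hj => by
  simp_all [assigned, restrictTo_eq_some_iff]

lemma assigned_restrictTo_of_mem (h : A s) : assigned (restrictTo A μ) s = assigned μ s := by
  ext j
  simp [assigned, restrictTo_eq_some_iff, h]

lemma restrictTo_or :
    restrictTo (fun s => A s ∨ B s) μ = fun i => (restrictTo A μ i).or (restrictTo B μ i) := by
  funext i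
  rcases h : μ i with _ | s
  · simp [restrictTo, h]
  · by_cases hA : A s <;> simp [restrictTo, h, hA, Option.filter_some]

lemma restrictTo_of_forall (h : ∀ s, A s) : restrictTo A μ = μ := by
  funext i
  rcases hμ : μ i with _ | s <;> simp [restrictTo, hμ, h]

lemma restrictTo_congr (h : ∀ s, A s ↔ B s) (μ : Matching I S) :
    restrictTo A μ = restrictTo B μ := by
  funext i
  simp [restrictTo, h]

end Restrict

/-- The profile of a TDA round for tier `m`, given the matching `μ₀` of the earlier rounds. -/
noncomputable def roundProfile (t : S → ℕ) (Q : I → Pref S) (m : ℕ) (μ₀ : Matching I S) :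
    I → Pref S :=
  fun j => if μ₀ j = none then trunc (fun s => t s = m) (Q j) else trunc (fun _ => False) (Q j)

lemma TDAaux_succ (E : Prio I S) (t : S → ℕ) (Q : I → Pref S) (k : ℕ) :
    TDAaux E t Q (k + 1) =
      fun i => (TDAaux E t Q k i).or (DA E (roundProfile t Q (k + 1) (TDAaux E t Q k)) i) := by
  funext i
  rw [TDAaux]
  dsimp only
  cases TDAaux E t Q k i <;> rfl

section Round

variable {E : Prio I S} {t : S → ℕ} {Q : I → Pref S} {m : ℕ} {μ ρ : Matching I S} {i : I} {s : S}

lemma roundProfile_of_eq_none {μ₀ : Matching I S} (h : μ₀ i = none) :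
    roundProfile t Q m μ₀ i = trunc (fun s => t s = m) (Q i) :=
  if_pos h

lemma roundProfile_rank_le_none_iff {μ₀ : Matching I S} :
    (roundProfile t Q m μ₀ i).rank (some s) ≤ (roundProfile t Q m μ₀ i).rank none ↔
      μ₀ i = none ∧ t s = m ∧ (Q i).rank (some s) < (Q i).rank none := by
  by_cases h : μ₀ i = none
  · rw [roundProfile_of_eq_none h, trunc_rank_le_none_iff]
    simp [h]
  · rw [roundProfile, if_neg h, trunc_rank_le_none_iff]
    simp [h]

@[simp] lemma roundProfile_rank_none {μ₀ : Matching I S} :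
    (roundProfile t Q m μ₀ i).rank none = (Q i).rank none := by
  by_cases h : μ₀ i = none <;> simp [roundProfile, h]

lemma roundProfile_rank_of_tier {μ₀ : Matching I S} (h : μ₀ i = none) (hs : t s = m) :
    (roundProfile t Q m μ₀ i).rank (some s) = (Q i).rank (some s) := by
  rw [roundProfile_of_eq_none h]
  exact trunc_rank_of_mem (A := fun s => t s = m) _ hs

lemma IndivRat.roundProfile_eq_some {μ₀ : Matching I S} (hρ : IndivRat (roundProfile t Q m μ₀) ρ)
    (h : ρ i = some s) : μ₀ i = none ∧ t s = m ∧ (Q i).rank (some s) < (Q i).rank none :=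
  roundProfile_rank_le_none_iff.1 (h ▸ hρ i)

lemma IndivRat.rank_lt_none_of_reshuffle (hμ : IndivRat (fun j => reshuffle t (Q j)) μ)
    (h : μ i = some s) : (Q i).rank (some s) < (Q i).rank none :=
  (reshuffle_rank_lt_none_iff t (Q i)).1
    (((reshuffle t (Q i)).rank_some_lt_none_iff_le s).2 (h ▸ hμ i))

lemma stable_restrictTo_round (hμ : Stable E (fun j => reshuffle t (Q j)) μ) :
    Stable E (roundProfile t Q m (restrictTo (fun s => t s < m) μ))
      (restrictTo (fun s => t s = m) μ) := by
  have hIR : IndivRat (roundProfile t Q m (restrictTo (fun s => t s < m) μ))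
      (restrictTo (fun s => t s = m) μ) := by
    intro i
    rcases hν : restrictTo (fun s => t s = m) μ i with _ | s
    · exact le_rfl
    obtain ⟨hμi, hts⟩ := restrictTo_eq_some_iff.1 hν
    refine roundProfile_rank_le_none_iff.2 ⟨restrictTo_eq_none_iff.2 fun s' hμi' => ?_, hts,
      hμ.2.1.rank_lt_none_of_reshuffle hμi⟩
    obtain rfl := Option.some_injective _ (hμi.symm.trans hμi')
    omega
  refine ⟨fun s => (Finset.card_le_card assigned_restrictTo_subset).trans (hμ.1 s), hIR,
    fun i s hb => ?_⟩
  obtain ⟨h0, hts, hQs⟩ := roundProfile_rank_le_none_iff.1 (hb.1.le.trans (hIR i))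
  refine hμ.2.2 i s (hb.of_assigned_eq ?_ (assigned_restrictTo_of_mem hts))
  have hlt := hb.1
  rw [roundProfile_rank_of_tier h0 hts] at hlt
  rcases hμi : μ i with _ | s₁
  · exact (reshuffle_rank_lt_none_iff t _).2 hQs
  have hm : m ≤ t s₁ := not_lt.1 (restrictTo_eq_none_iff.1 h0 s₁ hμi)
  rcases hm.eq_or_lt with h | h
  · have hν : restrictTo (fun s => t s = m) μ i = some s₁ :=
      restrictTo_eq_some_iff.2 ⟨hμi, h.symm⟩
    rw [hν, roundProfile_rank_of_tier h0 h.symm] at hlt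
    exact (reshuffle_rank_lt_iff_of_tier_eq t _ hQs (hμ.2.1.rank_lt_none_of_reshuffle hμi)
      (hts.trans h)).2 hlt
  · exact reshuffle_rank_lt_of_tier_lt t _ hQs (hts ▸ h)

lemma exists_tier_eq_of_round (hμ : Stable E (fun j => reshuffle t (Q j)) μ)
    (hρ : StudentOptimal E (roundProfile t Q m (restrictTo (fun s => t s < m) μ)) ρ)
    (h : ρ i = some s) : ∃ s₁, μ i = some s₁ ∧ t s₁ = m := by
  obtain ⟨s₁, hν⟩ := Option.ne_none_iff_exists'.1
    (mt (hρ.eq_none_iff (stable_restrictTo_round hμ) i).2 (by simp [h]))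
  exact ⟨s₁, restrictTo_eq_some_iff.1 hν⟩

lemma reshuffle_rank_le_of_round (hμ : Stable E (fun j => reshuffle t (Q j)) μ)
    (hρ : StudentOptimal E (roundProfile t Q m (restrictTo (fun s => t s < m) μ)) ρ)
    (h : ρ i = some s) : (reshuffle t (Q i)).rank (some s) ≤ (reshuffle t (Q i)).rank (μ i) := by
  obtain ⟨h0, hts, hQs⟩ := hρ.1.2.1.roundProfile_eq_some h
  obtain ⟨s₁, hμi, hts₁⟩ := exists_tier_eq_of_round hμ hρ h
  have hle := hρ.2 _ (stable_restrictTo_round hμ) i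
  rw [h, restrictTo_eq_some_iff.2 ⟨hμi, hts₁⟩, roundProfile_rank_of_tier h0 hts,
    roundProfile_rank_of_tier h0 hts₁] at hle
  rw [hμi]
  exact (reshuffle_rank_le_iff_of_tier_eq t _ hQs (hμ.2.1.rank_lt_none_of_reshuffle hμi)
    (hts.trans hts₁.symm)).2 hle

lemma assigned_or_round_of_tier_eq (hμ : Stable E (fun j => reshuffle t (Q j)) μ)
    (hρ : StudentOptimal E (roundProfile t Q m (restrictTo (fun s => t s < m) μ)) ρ)
    (hs : t s = m) : assigned (fun j => (ρ j).or (μ j)) s = assigned ρ s := by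
  ext j
  simp only [assigned, Finset.mem_filter, Finset.mem_univ, true_and]
  rcases hρj : ρ j with _ | s'
  · refine iff_of_false (fun hμj => ?_) (by simp)
    have hν := (hρ.eq_none_iff (stable_restrictTo_round hμ) j).1 hρj
    simp only [Option.none_or] at hμj
    simp [restrictTo_eq_some_iff (A := fun s => t s = m) |>.2 ⟨hμj, hs⟩] at hν
  · simp

lemma assigned_or_round_of_tier_ne (hμ : Stable E (fun j => reshuffle t (Q j)) μ)
    (hρ : StudentOptimal E (roundProfile t Q m (restrictTo (fun s => t s < m) μ)) ρ)
    (hs : t s ≠ m) : assigned (fun j => (ρ j).or (μ j)) s = assigned μ s := by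
  ext j
  simp only [assigned, Finset.mem_filter, Finset.mem_univ, true_and]
  rcases hρj : ρ j with _ | s'
  · simp
  obtain ⟨-, hts', -⟩ := hρ.1.2.1.roundProfile_eq_some hρj
  obtain ⟨s₁, hμj, hts₁⟩ := exists_tier_eq_of_round hμ hρ hρj
  rw [Option.some_or, hμj]
  exact iff_of_false (by rintro ⟨⟩; exact hs hts') (by rintro ⟨⟩; exact hs hts₁)

lemma stable_or_round (hμ : Stable E (fun j => reshuffle t (Q j)) μ)
    (hρ : StudentOptimal E (roundProfile t Q m (restrictTo (fun s => t s < m) μ)) ρ) :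
    Stable E (fun j => reshuffle t (Q j)) (fun j => (ρ j).or (μ j)) := by
  have hle : ∀ j, (reshuffle t (Q j)).rank ((ρ j).or (μ j)) ≤ (reshuffle t (Q j)).rank (μ j) := by
    intro j
    rcases hρj : ρ j with _ | s
    · simp
    · simpa using reshuffle_rank_le_of_round hμ hρ hρj
  refine ⟨fun s => ?_, fun j => (hle j).trans (hμ.2.1 j), fun i s hb => ?_⟩
  · by_cases hs : t s = m
    · rw [assigned_or_round_of_tier_eq hμ hρ hs]
      exact hρ.1.1 s
    · rw [assigned_or_round_of_tier_ne hμ hρ hs]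
      exact hμ.1 s
  have hQs : (Q i).rank (some s) < (Q i).rank none :=
    (reshuffle_rank_lt_none_iff t _).1 (hb.1.trans_le ((hle i).trans (hμ.2.1 i)))
  by_cases hs : t s = m
  swap
  · exact hμ.2.2 i s
      (hb.of_assigned_eq (hb.1.trans_le (hle i)) (assigned_or_round_of_tier_ne hμ hρ hs))
  refine hρ.1.2.2 i s (hb.of_assigned_eq ?_ (assigned_or_round_of_tier_eq hμ hρ hs))
  have hlt := hb.1
  rcases hρi : ρ i with _ | s₁
  · simp only [hρi, Option.none_or] at hlt
    have h0 : restrictTo (fun s => t s < m) μ i = none := by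
      refine restrictTo_eq_none_iff.2 fun s₂ hμi hts₂ => ?_
      rw [hμi] at hlt
      exact hlt.not_gt
        (reshuffle_rank_lt_of_tier_lt t _ (hμ.2.1.rank_lt_none_of_reshuffle hμi) (hs ▸ hts₂))
    rw [roundProfile_rank_of_tier h0 hs, roundProfile_rank_none]
    exact hQs
  · obtain ⟨h0, hts₁, hQs₁⟩ := hρ.1.2.1.roundProfile_eq_some hρi
    simp only [hρi, Option.some_or] at hlt
    rw [roundProfile_rank_of_tier h0 hs, roundProfile_rank_of_tier h0 hts₁]
    exact (reshuffle_rank_lt_iff_of_tier_eq t _ hQs hQs₁ (hs.trans hts₁.symm)).1 hlt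

theorem DA_roundProfile (hμ : StudentOptimal E (fun j => reshuffle t (Q j)) μ) :
    DA E (roundProfile t Q m (restrictTo (fun s => t s < m) μ)) =
      restrictTo (fun s => t s = m) μ := by
  have hν := stable_restrictTo_round (m := m) hμ.1
  have hρ := DA_studentOptimal E (roundProfile t Q m (restrictTo (fun s => t s < m) μ))
  funext i
  refine (roundProfile t Q m _ i).inj (le_antisymm (hρ.2 _ hν i) ?_)
  rcases hρi : DA E (roundProfile t Q m (restrictTo (fun s => t s < m) μ)) i with _ | s
  · rw [(hρ.eq_none_iff hν i).1 hρi]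
  obtain ⟨h0, hts, hQs⟩ := hρ.1.2.1.roundProfile_eq_some hρi
  obtain ⟨s₁, hμi, hts₁⟩ := exists_tier_eq_of_round hμ.1 hρ hρi
  have hle := hμ.2 _ (stable_or_round hμ.1 hρ) i
  simp only [hρi, Option.some_or, hμi] at hle
  rw [restrictTo_eq_some_iff.2 ⟨hμi, hts₁⟩, roundProfile_rank_of_tier h0 hts₁,
    roundProfile_rank_of_tier h0 hts]
  exact (reshuffle_rank_le_iff_of_tier_eq t _ (hμ.1.2.1.rank_lt_none_of_reshuffle hμi) hQs
    (hts₁.trans hts.symm)).1 hle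

end Round

theorem TDAaux_eq_restrictTo (E : Prio I S) (t : S → ℕ) (Q : I → Pref S) (ht : ∀ s, 1 ≤ t s)
    (k : ℕ) :
    TDAaux E t Q k = restrictTo (fun s => t s < k + 1) (DA E (fun i => reshuffle t (Q i))) := by
  induction k with
  | zero =>
    funext i
    exact (restrictTo_eq_none_iff.2 fun s _ => by have := ht s; omega).symm
  | succ k ih =>
    rw [TDAaux_succ, ih, DA_roundProfile (DA_studentOptimal E _), ← restrictTo_or]
    exact restrictTo_congr (fun s => by omega) _

theorem TDA_eq_DA_reshuffle_of_one_le (E : Prio I S) (t : S → ℕ) (Q : I → Pref S)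
    (ht : ∀ s, 1 ≤ t s) : TDA E t Q = DA E (fun i => reshuffle t (Q i)) := by
  rw [TDA, TDAaux_eq_restrictTo E t Q ht, restrictTo_of_forall]
  exact fun s => Nat.lt_succ_of_le (Finset.le_sup (Finset.mem_univ s))

/-- `TDA(t)(Q) = TDA(t)(Q̃) = DA(Q̃)` where `Q̃` is the reshuffled profile. -/
theorem TDA_eq_DA_reshuffle
    (E : Prio I S) (t : S → ℕ) (T : ℕ) (ht : IsTierStructure t T)
    (Q : I → Pref S) :
    TDA E t Q = TDA E t (fun i => reshuffle t (Q i)) ∧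
    TDA E t Q = DA E (fun i => reshuffle t (Q i)) := by
  have ht₁ : ∀ s, 1 ≤ t s := fun s => (ht.1 s).1
  have hDA := TDA_eq_DA_reshuffle_of_one_le E t Q ht₁
  refine ⟨?_, hDA⟩
  rw [hDA, TDA_eq_DA_reshuffle_of_one_le E t _ ht₁]
  exact DA_congr fun i => (sameAcceptableOrder_reshuffle_reshuffle t (Q i)).symm

end SchoolChoice
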